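/- Let β, λ > 0. There exists C > 0 such that for all x, z ∈ (0,∞) with x ≠ z, ( ∫_{Γ₊(x)} |t^β ∂_t^β P_t^{𝔅_λ,1}(y,z)|² dy dt / t² )^{1/2} ≤ C/|x−z|, and for all x, z ∈ (0,∞), ( ∫_{Γ₊(x)} |t^β ∂_t^β P_t^{𝔅_λ,2}(y,z)|² dy dt / t² )^{1/2} ≤ C/(x+z), where ∂_t^β acts in the variable t with y, z fixed. -/

import Mathlib

open MeasureTheory Real Set

/-- For `β > 0`, the unique `m ∈ ℕ` with `m - 1 ≤ β < m`. -/
noncomputable def fracOrder (β : ℝ) : ℕ := ⌊β⌋.toNat + 1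

/-- The `β`-th fractional derivative in `t` (à la Segovia–Wheeden):
`∂_t^β F(t) = (e^{−iπ(m−β)}/Γ(m−β)) ∫₀^∞ ∂_t^m F(t+s) s^{m−β−1} ds` with `m - 1 ≤ β < m`. -/
noncomputable def fracDeriv (β : ℝ) (F : ℝ → ℂ) (t : ℝ) : ℂ :=
  (Complex.exp (-(Complex.I * (Real.pi : ℂ) * ((fracOrder β : ℂ) - (β : ℂ)))) /
      Complex.Gamma ((fracOrder β : ℂ) - (β : ℂ))) *
    ∫ s in Set.Ioi (0 : ℝ), iteratedDeriv (fracOrder β) F (t + s) *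
      ((s ^ ((fracOrder β : ℝ) - β - 1) : ℝ) : ℂ)

/-- The part of the Bessel Poisson kernel integral with `θ` ranging over `(a, b)`. -/
noncomputable def besselPoissonPart (lam a b t x y : ℝ) : ℝ :=
  (2 * lam * (x * y) ^ lam * t / Real.pi) *
    ∫ θ in Set.Ioo a b, Real.sin θ ^ (2 * lam - 1) /
      (t ^ 2 + (x - y) ^ 2 + 2 * x * y * (1 - Real.cos θ)) ^ (lam + 1)

/-- The Bessel Poisson kernel `P_t^{𝔅_λ}(x,y)`. -/
noncomputable def besselPoisson (lam t x y : ℝ) : ℝ :=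
  besselPoissonPart lam 0 Real.pi t x y

/-- `P_t^{𝔅_λ,1}(x,y)`: the part of the θ-integral over `(0, π/2)`. -/
noncomputable def besselPoisson1 (lam t x y : ℝ) : ℝ :=
  besselPoissonPart lam 0 (Real.pi / 2) t x y

/-- `P_t^{𝔅_λ,2}(x,y)`: the part of the θ-integral over `(π/2, π)`. -/
noncomputable def besselPoisson2 (lam t x y : ℝ) : ℝ :=
  besselPoissonPart lam (Real.pi / 2) Real.pi t x y

/-!
Both pieces are `c(y,z) ∫ sin^{2λ-1}θ · t (t² + B_θ)^{-λ-1} dθ` with `B_θ = |y - z e^{iθ}|²`.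
Since `t (t² + B)^{-λ-1}` is homogeneous of degree `-2λ-1` in `(t, √B)`, its `m`-th `t`-derivative
is a fixed combination of `t^j (t² + B)^{E - j/2}`, `E = -λ - (m+1)/2`, hence `O((t² + B)^E)`
uniformly in `B`. On `(0, π/2)`, `sin θ ≍ θ` and `B_θ ≳ (y - z)² + yz θ²` give
`|∂_t^m P¹| ≲ (t + |y - z|)^{-m-1}`; on `(π/2, π)`, `B_θ ≥ y² + z²` gives
`|∂_t^m P²| ≲ (t + y + z)^{-m-1}`. Integrating such a bound against `s^{m-β-1}` yields
`|∂_t^β P^i| ≲ (t + R)^{-β-1}`. On the cone `|x - y| < t` one has `t + R(y) ≥ (t + R(x))/2`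
for `R = |· - z|` and `R = · + z`, so the square function is at most
`∫₀^∞ 2t · t^{2β-2} (t + R(x))^{-2β-2} dt ≍ R(x)^{-2}`. Every one-dimensional integral above is
an instance of `∫₀^∞ s^p min(r^δ, s^δ) ds = (1/(p+1) - 1/(p+δ+1)) r^{p+δ+1}`.
-/

open Filter Topology

noncomputable section

/-- Homogeneous of degree `2E` in `(τ, √B)`. -/
def homMonomial (E : ℝ) (j : ℕ) (B τ : ℝ) : ℝ := τ ^ j * (τ ^ 2 + B) ^ (E - j / 2)

def homSpan (E : ℝ) : Submodule ℝ (ℝ → ℝ → ℝ) := Submodule.span ℝ (Set.range (homMonomial E))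

lemma abs_homMonomial_le (E : ℝ) (j : ℕ) {B τ : ℝ} (hB : 0 ≤ B) (hτ : 0 < τ) :
    |homMonomial E j B τ| ≤ (τ ^ 2 + B) ^ E := by
  have hpos : 0 < τ ^ 2 + B := by positivity
  have hpow : τ ^ j ≤ (τ ^ 2 + B) ^ ((j : ℝ) / 2) := by
    calc τ ^ j = (τ ^ 2) ^ ((j : ℝ) / 2) := by
          rw [← Real.rpow_natCast τ 2, ← Real.rpow_mul hτ.le, ← Real.rpow_natCast]
          congr 1; push_cast; ring
      _ ≤ (τ ^ 2 + B) ^ ((j : ℝ) / 2) := by gcongr; linarith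
  rw [homMonomial, abs_of_nonneg (by positivity)]
  calc τ ^ j * (τ ^ 2 + B) ^ (E - j / 2)
      ≤ (τ ^ 2 + B) ^ ((j : ℝ) / 2) * (τ ^ 2 + B) ^ (E - j / 2) := by gcongr
    _ = (τ ^ 2 + B) ^ E := by rw [← Real.rpow_add hpos]; ring_nf

lemma hasDerivAt_homMonomial (E : ℝ) (j : ℕ) {B τ : ℝ} (hB : 0 ≤ B) (hτ : 0 < τ) :
    HasDerivAt (homMonomial E j B)
      (j * homMonomial (E - 1 / 2) (j - 1) B τ
        + 2 * (E - j / 2) * homMonomial (E - 1 / 2) (j + 1) B τ) τ := by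
  have hpos : 0 < τ ^ 2 + B := by positivity
  have hsq : HasDerivAt (fun σ : ℝ => σ ^ 2 + B) (2 * τ) τ := by
    simpa using (hasDerivAt_pow 2 τ).add_const B
  refine ((hasDerivAt_pow j τ).fun_mul
    (hsq.rpow_const (p := E - j / 2) (Or.inl hpos.ne'))).congr_deriv ?_
  rcases j with _ | j
  · simp only [homMonomial]
    norm_num
    ring_nf
  · simp only [homMonomial, Nat.add_sub_cancel]
    rw [show E - 1 / 2 - ((j + 1 + 1 : ℕ) : ℝ) / 2 = E - ((j + 1 : ℕ) : ℝ) / 2 - 1 by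
        push_cast; ring,
      show E - 1 / 2 - (j : ℝ) / 2 = E - ((j + 1 : ℕ) : ℝ) / 2 by push_cast; ring]
    ring

lemma exists_hasDerivAt_of_mem_homSpan {E : ℝ} {g : ℝ → ℝ → ℝ} (hg : g ∈ homSpan E) :
    ∃ g' ∈ homSpan (E - 1 / 2), ∀ B τ, 0 ≤ B → 0 < τ → HasDerivAt (g B) (g' B τ) τ := by
  induction hg using Submodule.span_induction with
  | mem g hg =>
    obtain ⟨j, rfl⟩ := hg
    refine ⟨(j : ℝ) • homMonomial (E - 1 / 2) (j - 1)
      + (2 * (E - j / 2)) • homMonomial (E - 1 / 2) (j + 1), ?_, ?_⟩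
    · exact add_mem (Submodule.smul_mem _ _ (Submodule.subset_span ⟨_, rfl⟩))
        (Submodule.smul_mem _ _ (Submodule.subset_span ⟨_, rfl⟩))
    · intro B τ hB hτ
      exact hasDerivAt_homMonomial E j hB hτ
  | zero => exact ⟨0, zero_mem _, fun B τ _ _ => hasDerivAt_const τ 0⟩
  | add g₁ g₂ _ _ ih₁ ih₂ =>
    obtain ⟨g₁', hg₁', hd₁⟩ := ih₁
    obtain ⟨g₂', hg₂', hd₂⟩ := ih₂
    exact ⟨g₁' + g₂', add_mem hg₁' hg₂', fun B τ hB hτ => (hd₁ B τ hB hτ).add (hd₂ B τ hB hτ)⟩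
  | smul c g _ ih =>
    obtain ⟨g', hg', hd⟩ := ih
    exact ⟨c • g', Submodule.smul_mem _ c hg', fun B τ hB hτ => (hd B τ hB hτ).const_mul c⟩

lemma exists_abs_le_of_mem_homSpan {E : ℝ} {g : ℝ → ℝ → ℝ} (hg : g ∈ homSpan E) :
    ∃ C ≥ 0, ∀ B τ, 0 ≤ B → 0 < τ → |g B τ| ≤ C * (τ ^ 2 + B) ^ E := by
  induction hg using Submodule.span_induction with
  | mem g hg =>
    obtain ⟨j, rfl⟩ := hg
    exact ⟨1, zero_le_one, fun B τ hB hτ => by simpa using abs_homMonomial_le E j hB hτ⟩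
  | zero => exact ⟨0, le_rfl, fun B τ _ _ => by simp⟩
  | add g₁ g₂ _ _ ih₁ ih₂ =>
    obtain ⟨C₁, hC₁, h₁⟩ := ih₁
    obtain ⟨C₂, hC₂, h₂⟩ := ih₂
    refine ⟨C₁ + C₂, by positivity, fun B τ hB hτ => ?_⟩
    calc |g₁ B τ + g₂ B τ| ≤ |g₁ B τ| + |g₂ B τ| := abs_add_le _ _
      _ ≤ C₁ * (τ ^ 2 + B) ^ E + C₂ * (τ ^ 2 + B) ^ E := add_le_add (h₁ B τ hB hτ) (h₂ B τ hB hτ)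
      _ = (C₁ + C₂) * (τ ^ 2 + B) ^ E := by ring
  | smul c g _ ih =>
    obtain ⟨C, hC, h⟩ := ih
    refine ⟨|c| * C, by positivity, fun B τ hB hτ => ?_⟩
    rw [Pi.smul_apply, Pi.smul_apply, smul_eq_mul, abs_mul, mul_assoc]
    exact mul_le_mul_of_nonneg_left (h B τ hB hτ) (abs_nonneg c)

lemma measurable_of_mem_homSpan {E : ℝ} {g : ℝ → ℝ → ℝ} (hg : g ∈ homSpan E) (τ : ℝ) :
    Measurable fun B => g B τ := by
  induction hg using Submodule.span_induction with
  | mem g hg =>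
    obtain ⟨j, rfl⟩ := hg
    unfold homMonomial
    fun_prop
  | zero => exact measurable_const
  | add g₁ g₂ _ _ ih₁ ih₂ => exact ih₁.add ih₂
  | smul c g _ ih => exact ih.const_mul c

lemma exists_abs_le_of_mem_homSpan_of_le {E : ℝ} (hE : E ≤ 0) {g : ℝ → ℝ → ℝ}
    (hg : g ∈ homSpan E) :
    ∃ C ≥ 0, ∀ B τ c, 0 ≤ B → 0 < c → c ≤ τ → |g B τ| ≤ C * (c ^ 2) ^ E := by
  obtain ⟨C, hC, h⟩ := exists_abs_le_of_mem_homSpan hg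
  refine ⟨C, hC, fun B τ c hB hc hcτ => (h B τ hB (hc.trans_le hcτ)).trans ?_⟩
  exact mul_le_mul_of_nonneg_left (Real.rpow_le_rpow_of_nonpos (by positivity) (by nlinarith) hE) hC

section WeightedIntegral

variable {α : Type*} [MeasurableSpace α] {μ : Measure α} {w b : α → ℝ}

lemma aestronglyMeasurable_mul_of_mem_homSpan (hw : AEStronglyMeasurable w μ)
    (hb : Measurable b) {E : ℝ} {g : ℝ → ℝ → ℝ} (hg : g ∈ homSpan E) (τ : ℝ) :
    AEStronglyMeasurable (fun θ => w θ * g (b θ) τ) μ :=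
  hw.mul ((measurable_of_mem_homSpan hg τ).comp hb).aestronglyMeasurable

lemma integrable_mul_of_mem_homSpan (hw : Integrable w μ) (hb : Measurable b)
    (hb0 : ∀ θ, 0 ≤ b θ) {E : ℝ} (hE : E ≤ 0) {g : ℝ → ℝ → ℝ} (hg : g ∈ homSpan E)
    {τ : ℝ} (hτ : 0 < τ) :
    Integrable (fun θ => w θ * g (b θ) τ) μ := by
  obtain ⟨C, -, hC⟩ := exists_abs_le_of_mem_homSpan_of_le hE hg
  refine (hw.norm.mul_const (C * (τ ^ 2) ^ E)).mono'
    (aestronglyMeasurable_mul_of_mem_homSpan hw.1 hb hg τ)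
    (Eventually.of_forall fun θ => ?_)
  rw [norm_mul, Real.norm_eq_abs (g _ _)]
  exact mul_le_mul_of_nonneg_left (hC _ _ _ (hb0 θ) hτ le_rfl) (norm_nonneg _)

lemma hasDerivAt_integral_of_mem_homSpan (hw : Integrable w μ) (hb : Measurable b)
    (hb0 : ∀ θ, 0 ≤ b θ) {E : ℝ} (hE : E ≤ 0) {g g' : ℝ → ℝ → ℝ} (hg : g ∈ homSpan E)
    (hg' : g' ∈ homSpan (E - 1 / 2))
    (hderiv : ∀ B τ, 0 ≤ B → 0 < τ → HasDerivAt (g B) (g' B τ) τ) {τ₀ : ℝ} (hτ₀ : 0 < τ₀) :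
    HasDerivAt (fun τ => ∫ θ, w θ * g (b θ) τ ∂μ) (∫ θ, w θ * g' (b θ) τ₀ ∂μ) τ₀ := by
  have hE' : E - 1 / 2 ≤ 0 := by linarith
  obtain ⟨C, -, hC⟩ := exists_abs_le_of_mem_homSpan_of_le hE' hg'
  have hball : ∀ τ ∈ Metric.ball τ₀ (τ₀ / 2), τ₀ / 2 ≤ τ := fun τ hτ => by
    have := Metric.mem_ball.1 hτ
    rw [Real.dist_eq] at this
    linarith [(abs_lt.1 this).1]
  refine (hasDerivAt_integral_of_dominated_loc_of_deriv_le (Metric.ball_mem_nhds τ₀ (half_pos hτ₀))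
    (Eventually.of_forall (aestronglyMeasurable_mul_of_mem_homSpan hw.1 hb hg))
    (integrable_mul_of_mem_homSpan hw hb hb0 hE hg hτ₀)
    (F' := fun τ θ => w θ * g' (b θ) τ)
    (aestronglyMeasurable_mul_of_mem_homSpan hw.1 hb hg' τ₀)
    (bound := fun θ => ‖w θ‖ * (C * ((τ₀ / 2) ^ 2) ^ (E - 1 / 2)))
    (Eventually.of_forall fun θ τ hτ => ?_)
    (hw.norm.mul_const _)
    (Eventually.of_forall fun θ τ hτ => ?_)).2
  · rw [norm_mul, Real.norm_eq_abs (g' _ _)]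
    exact mul_le_mul_of_nonneg_left (hC _ _ _ (hb0 θ) (half_pos hτ₀) (hball τ hτ))
      (norm_nonneg _)
  · exact (hderiv _ _ (hb0 θ) ((half_pos hτ₀).trans_le (hball τ hτ))).const_mul (w θ)

lemma exists_iteratedDeriv_integral_eq {E : ℝ} (hE : E ≤ 0) {g : ℝ → ℝ → ℝ}
    (hg : g ∈ homSpan E) (k : ℕ) :
    ∃ gₖ ∈ homSpan (E - k / 2), ∀ (μ : Measure α) (w b : α → ℝ), Integrable w μ →
      Measurable b → (∀ θ, 0 ≤ b θ) → ∀ τ, 0 < τ →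
        iteratedDeriv k (fun σ => ((∫ θ, w θ * g (b θ) σ ∂μ : ℝ) : ℂ)) τ
          = ((∫ θ, w θ * gₖ (b θ) τ ∂μ : ℝ) : ℂ) := by
  induction k with
  | zero => exact ⟨g, by simpa using hg, fun _ _ _ _ _ _ _ _ => by rw [iteratedDeriv_zero]⟩
  | succ k ih =>
    obtain ⟨gₖ, hgₖ, hk⟩ := ih
    obtain ⟨g', hg', hd⟩ := exists_hasDerivAt_of_mem_homSpan hgₖ
    have hEk : E - k / 2 ≤ 0 := by linarith [(k.cast_nonneg : (0 : ℝ) ≤ k)]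
    refine ⟨g', by convert hg' using 2; push_cast; ring, fun μ w b hw hb hb0 τ hτ => ?_⟩
    have hnear : iteratedDeriv k (fun σ => ((∫ θ, w θ * g (b θ) σ ∂μ : ℝ) : ℂ))
        =ᶠ[𝓝 τ] fun σ => ((∫ θ, w θ * gₖ (b θ) σ ∂μ : ℝ) : ℂ) := by
      filter_upwards [Ioi_mem_nhds hτ] with σ hσ using hk μ w b hw hb hb0 σ hσ
    rw [iteratedDeriv_succ, hnear.deriv_eq]
    exact (hasDerivAt_integral_of_mem_homSpan hw hb hb0 hEk hgₖ hg' hd hτ).ofReal_comp.deriv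

lemma abs_integral_mul_le (hw : Integrable w μ) (hw0 : 0 ≤ᵐ[μ] w) (hb : Measurable b)
    (hb0 : ∀ θ, 0 ≤ b θ) {E : ℝ} (hE : E ≤ 0) {g : ℝ → ℝ → ℝ} {C : ℝ}
    (hC : ∀ B τ, 0 ≤ B → 0 < τ → |g B τ| ≤ C * (τ ^ 2 + B) ^ E) {τ : ℝ} (hτ : 0 < τ) :
    |∫ θ, w θ * g (b θ) τ ∂μ| ≤ C * ∫ θ, w θ * (τ ^ 2 + b θ) ^ E ∂μ := by
  have hint : Integrable (fun θ => w θ * (τ ^ 2 + b θ) ^ E) μ := by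
    refine (hw.norm.mul_const ((τ ^ 2) ^ E)).mono'
      (hw.1.mul (by fun_prop : Measurable fun θ => (τ ^ 2 + b θ) ^ E).aestronglyMeasurable)
      (Eventually.of_forall fun θ => ?_)
    have hpos : 0 < τ ^ 2 + b θ := by linarith [hb0 θ, pow_pos hτ 2]
    rw [norm_mul, Real.norm_of_nonneg (Real.rpow_nonneg hpos.le _)]
    exact mul_le_mul_of_nonneg_left
      (Real.rpow_le_rpow_of_nonpos (by positivity) (by linarith [hb0 θ]) hE) (norm_nonneg _)
  rw [← integral_const_mul, ← Real.norm_eq_abs]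
  refine norm_integral_le_of_norm_le (hint.const_mul C) ?_
  filter_upwards [hw0] with θ hθ
  rw [norm_mul, Real.norm_of_nonneg hθ, Real.norm_eq_abs]
  calc w θ * |g (b θ) τ| ≤ w θ * (C * (τ ^ 2 + b θ) ^ E) :=
        mul_le_mul_of_nonneg_left (hC _ _ (hb0 θ) hτ) hθ
    _ = C * (w θ * (τ ^ 2 + b θ) ^ E) := by ring

lemma exists_norm_iteratedDeriv_integral_le {E : ℝ} (hE : E ≤ 0) {g : ℝ → ℝ → ℝ}
    (hg : g ∈ homSpan E) (k : ℕ) :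
    ∃ C ≥ 0, ∀ (μ : Measure α) (w b : α → ℝ), Integrable w μ → 0 ≤ᵐ[μ] w →
      Measurable b → (∀ θ, 0 ≤ b θ) → ∀ τ, 0 < τ →
        ‖iteratedDeriv k (fun σ => ((∫ θ, w θ * g (b θ) σ ∂μ : ℝ) : ℂ)) τ‖
          ≤ C * ∫ θ, w θ * (τ ^ 2 + b θ) ^ (E - k / 2) ∂μ := by
  obtain ⟨gₖ, hgₖ, hk⟩ := exists_iteratedDeriv_integral_eq (α := α) hE hg k
  obtain ⟨C, hC, hbound⟩ := exists_abs_le_of_mem_homSpan hgₖ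
  refine ⟨C, hC, fun μ w b hw hw0 hb hb0 τ hτ => ?_⟩
  rw [hk μ w b hw hb hb0 τ hτ, Complex.norm_real, Real.norm_eq_abs]
  exact abs_integral_mul_le hw hw0 hb hb0 (by linarith [(k.cast_nonneg : (0 : ℝ) ≤ k)])
    hbound hτ

end WeightedIntegral

section PowerIntegral

variable {p δ r : ℝ}

lemma eqOn_rpow_mul_min_rpow_Ioc (hδ : δ ≤ 0) :
    EqOn (fun s => s ^ p * min (r ^ δ) (s ^ δ)) (fun s => s ^ p * r ^ δ) (Ioc 0 r) :=
  fun s hs => by simp only [min_eq_left (Real.rpow_le_rpow_of_nonpos hs.1 hs.2 hδ)]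

lemma eqOn_rpow_mul_min_rpow_Ioi (hδ : δ ≤ 0) (hr : 0 < r) :
    EqOn (fun s => s ^ p * min (r ^ δ) (s ^ δ)) (fun s => s ^ (p + δ)) (Ioi r) :=
  fun s hs => by
    simp only [min_eq_right (Real.rpow_le_rpow_of_nonpos hr (le_of_lt hs) hδ),
      Real.rpow_add (hr.trans hs)]

lemma integrableOn_rpow_mul_min_rpow (hp : -1 < p) (hpδ : p + δ + 1 < 0) (hr : 0 < r) :
    IntegrableOn (fun s => s ^ p * min (r ^ δ) (s ^ δ)) (Ioi 0) := by
  have hδ : δ ≤ 0 := by linarith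
  rw [← Ioc_union_Ioi_eq_Ioi hr.le]
  refine IntegrableOn.union ?_ ?_
  · refine IntegrableOn.congr_fun ?_ (eqOn_rpow_mul_min_rpow_Ioc hδ).symm measurableSet_Ioc
    exact ((intervalIntegrable_iff_integrableOn_Ioc_of_le hr.le).1
      (intervalIntegral.intervalIntegrable_rpow' hp)).mul_const _
  · exact (integrableOn_Ioi_rpow_of_lt (by linarith) hr).congr_fun
      (eqOn_rpow_mul_min_rpow_Ioi hδ hr).symm measurableSet_Ioi

lemma integral_rpow_mul_min_rpow (hp : -1 < p) (hpδ : p + δ + 1 < 0) (hr : 0 < r) :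
    ∫ s in Ioi 0, s ^ p * min (r ^ δ) (s ^ δ)
      = (1 / (p + 1) - 1 / (p + δ + 1)) * r ^ (p + δ + 1) := by
  have hδ : δ ≤ 0 := by linarith
  have hint := integrableOn_rpow_mul_min_rpow hp hpδ hr
  rw [← Ioc_union_Ioi_eq_Ioi hr.le] at hint ⊢
  rw [setIntegral_union (Ioc_disjoint_Ioi le_rfl) measurableSet_Ioi
      (hint.mono_set subset_union_left) (hint.mono_set subset_union_right),
    setIntegral_congr_fun measurableSet_Ioc (eqOn_rpow_mul_min_rpow_Ioc hδ),
    setIntegral_congr_fun measurableSet_Ioi (eqOn_rpow_mul_min_rpow_Ioi hδ hr),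
    integral_mul_const, ← intervalIntegral.integral_of_le hr.le, integral_rpow (Or.inl hp),
    Real.zero_rpow (by linarith), integral_Ioi_rpow_of_lt (by linarith) hr]
  have h : r ^ (p + 1) * r ^ δ = r ^ (p + δ + 1) := by rw [← Real.rpow_add hr]; ring_nf
  linear_combination (1 / (p + 1)) * h

lemma setIntegral_le_of_le_rpow_mul_min (hp : -1 < p) (hpδ : p + δ + 1 < 0) (hr : 0 < r)
    {S : Set ℝ} (hS : S ⊆ Ioi 0) (hSm : MeasurableSet S) {K : ℝ} (hK : 0 ≤ K) {f : ℝ → ℝ}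
    (hf0 : ∀ s ∈ S, 0 ≤ f s) (hf : ∀ s ∈ S, f s ≤ K * (s ^ p * min (r ^ δ) (s ^ δ))) :
    ∫ s in S, f s ≤ K * ((1 / (p + 1) - 1 / (p + δ + 1)) * r ^ (p + δ + 1)) := by
  have hint := (integrableOn_rpow_mul_min_rpow hp hpδ hr).const_mul K
  calc ∫ s in S, f s ≤ ∫ s in S, K * (s ^ p * min (r ^ δ) (s ^ δ)) :=
        integral_mono_of_nonneg
          (by filter_upwards [ae_restrict_mem hSm] with s hs using hf0 s hs)
          (IntegrableOn.mono_set hint hS)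
          (by filter_upwards [ae_restrict_mem hSm] with s hs using hf s hs)
    _ ≤ ∫ s in Ioi 0, K * (s ^ p * min (r ^ δ) (s ^ δ)) := by
        refine setIntegral_mono_set hint ?_ (LE.le.eventuallyLE hS)
        filter_upwards [ae_restrict_mem measurableSet_Ioi] with s (hs : 0 < s)
        have := le_min (Real.rpow_nonneg hr.le δ) (Real.rpow_nonneg hs.le δ)
        positivity
    _ = _ := by rw [integral_const_mul, integral_rpow_mul_min_rpow hp hpδ hr]

end PowerIntegral

lemma lt_fracOrder {β : ℝ} (hβ : 0 ≤ β) : β < fracOrder β := by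
  rw [fracOrder, Nat.cast_add, Nat.cast_one, ← Int.cast_natCast, Int.toNat_of_nonneg
    (Int.floor_nonneg.2 hβ)]
  exact Int.lt_floor_add_one β

lemma norm_fracDeriv_prefactor {β : ℝ} (hβ : 0 ≤ β) :
    ‖Complex.exp (-(Complex.I * (π : ℂ) * ((fracOrder β : ℂ) - (β : ℂ))))
      / Complex.Gamma ((fracOrder β : ℂ) - (β : ℂ))‖ = 1 / Real.Gamma (fracOrder β - β) := by
  have hcast : (fracOrder β : ℂ) - (β : ℂ) = ((fracOrder β - β : ℝ) : ℂ) := by push_cast; ring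
  rw [norm_div, Complex.norm_exp, hcast, Complex.Gamma_ofReal, Complex.norm_real,
    Real.norm_of_nonneg (Real.Gamma_pos_of_pos (by linarith [lt_fracOrder hβ])).le]
  simp [Complex.mul_re]

lemma norm_fracDeriv_le {β : ℝ} (hβ : 0 ≤ β) {F : ℝ → ℂ} {K R : ℝ} (hK : 0 ≤ K) (hR : 0 ≤ R)
    (hF : ∀ τ, 0 < τ →
      ‖iteratedDeriv (fracOrder β) F τ‖ ≤ K * (τ + R) ^ (-(fracOrder β : ℝ) - 1))
    {t : ℝ} (ht : 0 < t) :
    ‖fracDeriv β F t‖ ≤ K * ((1 / (fracOrder β - β) + 1 / (β + 1)) / Real.Gamma (fracOrder β - β))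
      * (t + R) ^ (-β - 1) := by
  set m := fracOrder β
  have hmβ : β < m := lt_fracOrder hβ
  have hδ : (-(m : ℝ) - 1) ≤ 0 := by linarith
  have hint : ‖∫ s in Ioi (0 : ℝ), iteratedDeriv m F (t + s) * ((s ^ ((m : ℝ) - β - 1) : ℝ) : ℂ)‖
      ≤ K * ((1 / ((m - β - 1) + 1) - 1 / ((m - β - 1) + (-(m : ℝ) - 1) + 1))
        * (t + R) ^ ((m - β - 1) + (-(m : ℝ) - 1) + 1)) := by
    refine (norm_integral_le_integral_norm _).trans
      (setIntegral_le_of_le_rpow_mul_min (by linarith) (by linarith) (by linarith) subset_rfl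
        measurableSet_Ioi hK (fun s _ => norm_nonneg _) fun s (hs : 0 < s) => ?_)
    rw [norm_mul, Complex.norm_real, Real.norm_of_nonneg (Real.rpow_nonneg hs.le _)]
    calc ‖iteratedDeriv m F (t + s)‖ * s ^ ((m : ℝ) - β - 1)
        ≤ K * (t + s + R) ^ (-(m : ℝ) - 1) * s ^ ((m : ℝ) - β - 1) :=
          mul_le_mul_of_nonneg_right (hF _ (by linarith)) (Real.rpow_nonneg hs.le _)
      _ ≤ K * min ((t + R) ^ (-(m : ℝ) - 1)) (s ^ (-(m : ℝ) - 1)) * s ^ ((m : ℝ) - β - 1) := by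
          gcongr
          exact le_min (Real.rpow_le_rpow_of_nonpos (by linarith) (by linarith) hδ)
            (Real.rpow_le_rpow_of_nonpos hs (by linarith) hδ)
      _ = _ := by ring
  have hΓ := Real.Gamma_pos_of_pos (sub_pos.2 hmβ)
  rw [fracDeriv, norm_mul, norm_fracDeriv_prefactor hβ]
  refine (mul_le_mul_of_nonneg_left hint (by positivity)).trans_eq ?_
  rw [show (m : ℝ) - β - 1 + (-(m : ℝ) - 1) + 1 = -β - 1 by ring,
    show (m : ℝ) - β - 1 + 1 = m - β by ring, show -β - 1 = -(β + 1) by ring, div_neg]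
  ring

lemma integral_ite_abs_sub_lt_le {x t c : ℝ} (ht : 0 ≤ t) (hc : 0 ≤ c) {f : ℝ → ℝ}
    (hf : ∀ y, 0 < y → |x - y| < t → |f y| ≤ c) :
    ∫ y in Ioi 0, (if |x - y| < t then f y else 0) ≤ 2 * t * c := by
  have hind : (fun y => if |x - y| < t then f y else 0) = (Ioo (x - t) (x + t)).indicator f := by
    ext y
    simp only [indicator, mem_Ioo, abs_sub_lt_iff]
    congr 1
    exact propext ⟨fun h => ⟨by linarith, by linarith⟩, fun h => ⟨by linarith, by linarith⟩⟩
  rw [hind, integral_indicator measurableSet_Ioo, Measure.restrict_restrict measurableSet_Ioo]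
  refine (Real.le_norm_self _).trans ((norm_setIntegral_le_of_norm_le_const (C := c)
    (measure_mono inter_subset_left |>.trans_lt measure_Ioo_lt_top) fun y hy => ?_).trans ?_)
  · exact hf y hy.2 (abs_sub_lt_iff.2 ⟨by linarith [hy.1.1], by linarith [hy.1.2]⟩)
  · rw [mul_comm]
    gcongr
    calc volume.real (Ioo (x - t) (x + t) ∩ Ioi 0) ≤ volume.real (Ioo (x - t) (x + t)) :=
          measureReal_mono inter_subset_left measure_Ioo_lt_top.ne
      _ = 2 * t := by rw [Real.volume_real_Ioo_of_le (by linarith)]; ring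

lemma integral_cone_le {E : Type*} [NormedAddCommGroup E] {β K r x : ℝ} (hβ : 0 < β)
    (hr : 0 < r) {G : ℝ → ℝ → E}
    (hG : ∀ t y, 0 < t → 0 < y → |x - y| < t → ‖G t y‖ ≤ K * t ^ β * (t + r) ^ (-β - 1)) :
    ∫ t in Ioi 0, ∫ y in Ioi 0, (if |x - y| < t then ‖G t y‖ ^ 2 / t ^ 2 else 0)
      ≤ K ^ 2 * (1 / β + 1) * r ^ (-2 : ℝ) := by
  have hbound : ∀ t ∈ Ioi (0 : ℝ),
      ∫ y in Ioi 0, (if |x - y| < t then ‖G t y‖ ^ 2 / t ^ 2 else 0)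
        ≤ 2 * K ^ 2 * (t ^ (2 * β - 1) * min (r ^ (-2 * β - 2)) (t ^ (-2 * β - 2))) := by
    intro t (ht : 0 < t)
    have hQ : (t + r) ^ (-β - 1) * (t + r) ^ (-β - 1) = (t + r) ^ (-2 * β - 2) := by
      rw [← Real.rpow_add (by linarith)]; ring_nf
    have hT : t ^ (2 * β - 1) = t ^ β * t ^ β / t := by
      rw [eq_div_iff ht.ne', ← Real.rpow_add ht, ← Real.rpow_add_one ht.ne']; ring_nf
    calc ∫ y in Ioi 0, (if |x - y| < t then ‖G t y‖ ^ 2 / t ^ 2 else 0)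
        ≤ 2 * t * ((K * t ^ β * (t + r) ^ (-β - 1)) ^ 2 / t ^ 2) :=
          integral_ite_abs_sub_lt_le ht.le (by positivity) fun y hy hxy => by
            rw [abs_of_nonneg (by positivity)]
            gcongr
            exact hG t y ht hy hxy
      _ = 2 * K ^ 2 * (t ^ (2 * β - 1) * (t + r) ^ (-2 * β - 2)) := by
          rw [← hQ, hT]
          field_simp
      _ ≤ 2 * K ^ 2 * (t ^ (2 * β - 1) * min (r ^ (-2 * β - 2)) (t ^ (-2 * β - 2))) := by
          have hδ : -2 * β - 2 ≤ 0 := by linarith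
          gcongr
          exact le_min (Real.rpow_le_rpow_of_nonpos hr (by linarith) hδ)
            (Real.rpow_le_rpow_of_nonpos ht (by linarith) hδ)
  refine (setIntegral_le_of_le_rpow_mul_min (by linarith) (by linarith) hr subset_rfl
    measurableSet_Ioi (by positivity) (fun t _ => integral_nonneg fun y => by positivity)
    hbound).trans_eq ?_
  rw [show 2 * β - 1 + (-2 * β - 2) + 1 = (-2 : ℝ) by ring]
  field_simp
  ring

lemma half_rpow_neg_sub_one {u : ℝ} (hu : 0 ≤ u) (q : ℝ) :
    (u / 2) ^ (-q - 1) = 2 ^ (q + 1) * u ^ (-q - 1) := by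
  rw [Real.div_rpow hu two_pos.le, show -q - 1 = -(q + 1) by ring, Real.rpow_neg two_pos.le]
  field_simp

lemma sqrt_integral_cone_le {β K x : ℝ} (hβ : 0 < β) (hK : 0 ≤ K) {ρ : ℝ → ℝ}
    (hρ : ∀ y, 0 < y → 0 ≤ ρ y) (hρx : 0 < ρ x) (hρlip : ∀ y, ρ x ≤ ρ y + |x - y|)
    {D : ℝ → ℝ → ℂ} (hD : ∀ t y, 0 < t → 0 < y → ‖D t y‖ ≤ K * (t + ρ y) ^ (-β - 1)) :
    √(∫ t in Ioi 0, ∫ y in Ioi 0,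
        (if |x - y| < t then ‖((t ^ β : ℝ) : ℂ) * D t y‖ ^ 2 / t ^ 2 else 0))
      ≤ 2 ^ (β + 1) * K * √(1 / β + 1) / ρ x := by
  have hG : ∀ t y, 0 < t → 0 < y → |x - y| < t →
      ‖((t ^ β : ℝ) : ℂ) * D t y‖ ≤ 2 ^ (β + 1) * K * t ^ β * (t + ρ x) ^ (-β - 1) := by
    intro t y ht hy hxy
    have hρy := hρ y hy
    have htβ : 0 ≤ t ^ β := Real.rpow_nonneg ht.le β
    rw [norm_mul, Complex.norm_real, Real.norm_of_nonneg htβ]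
    calc t ^ β * ‖D t y‖ ≤ t ^ β * (K * (t + ρ y) ^ (-β - 1)) :=
          mul_le_mul_of_nonneg_left (hD t y ht hy) htβ
      _ ≤ t ^ β * (K * ((t + ρ x) / 2) ^ (-β - 1)) :=
          mul_le_mul_of_nonneg_left (mul_le_mul_of_nonneg_left (Real.rpow_le_rpow_of_nonpos
            (by positivity) (by linarith [hρlip y]) (by linarith)) hK) htβ
      _ = 2 ^ (β + 1) * K * t ^ β * (t + ρ x) ^ (-β - 1) := by
          rw [half_rpow_neg_sub_one (by positivity)]; ring
  refine (Real.sqrt_le_sqrt (integral_cone_le hβ hρx hG)).trans_eq ?_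
  rw [Real.rpow_neg hρx.le, Real.rpow_two,
    show (2 ^ (β + 1) * K) ^ 2 * (1 / β + 1) * (ρ x ^ 2)⁻¹
      = (2 ^ (β + 1) * K / ρ x) ^ 2 * (1 / β + 1) by field_simp,
    Real.sqrt_mul (sq_nonneg _), Real.sqrt_sq (by positivity)]
  ring

section SinePower

lemma sin_rpow_le_mul_rpow (p : ℝ) {θ : ℝ} (h0 : 0 < θ) (h1 : θ ≤ π / 2) :
    sin θ ^ p ≤ max 1 ((2 / π) ^ p) * θ ^ p := by
  have hsin : 0 < sin θ := sin_pos_of_pos_of_lt_pi h0 (by linarith [pi_pos])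
  rcases le_or_gt 0 p with hp | hp
  · calc sin θ ^ p ≤ θ ^ p := Real.rpow_le_rpow hsin.le (sin_lt h0).le hp
      _ ≤ max 1 ((2 / π) ^ p) * θ ^ p :=
          le_mul_of_one_le_left (Real.rpow_nonneg h0.le p) (le_max_left _ _)
  · calc sin θ ^ p ≤ (2 / π * θ) ^ p :=
          Real.rpow_le_rpow_of_nonpos (by positivity) (mul_le_sin h0.le h1) hp.le
      _ = (2 / π) ^ p * θ ^ p := Real.mul_rpow (by positivity) h0.le
      _ ≤ max 1 ((2 / π) ^ p) * θ ^ p :=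
          mul_le_mul_of_nonneg_right (le_max_right _ _) (Real.rpow_nonneg h0.le p)

lemma intervalIntegrable_sin_rpow {p : ℝ} (hp : -1 < p) :
    IntervalIntegrable (fun θ => sin θ ^ p) volume 0 π := by
  have hleft : IntervalIntegrable (fun θ => sin θ ^ p) volume 0 (π / 2) := by
    refine ((intervalIntegral.intervalIntegrable_rpow' hp).const_mul
      (max 1 ((2 / π) ^ p))).mono_fun'
      (continuous_sin.measurable.pow_const p).aestronglyMeasurable ?_
    rw [uIoc_of_le (by positivity)]
    filter_upwards [ae_restrict_mem measurableSet_Ioc] with θ hθ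
    rw [Real.norm_of_nonneg (Real.rpow_nonneg (sin_nonneg_of_nonneg_of_le_pi hθ.1.le
      (by linarith [hθ.2, pi_pos])) p)]
    exact sin_rpow_le_mul_rpow p hθ.1 hθ.2
  have hright : IntervalIntegrable (fun θ => sin θ ^ p) volume (π / 2) π := by
    have := (hleft.comp_sub_left π).symm
    simp only [sin_pi_sub, sub_zero, show π - π / 2 = π / 2 by ring] at this
    exact this
  exact hleft.trans hright

lemma integrableOn_sin_rpow {p : ℝ} (hp : -1 < p) {a b : ℝ} (ha : 0 ≤ a) (hb : b ≤ π) :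
    IntegrableOn (fun θ => sin θ ^ p) (Ioo a b) :=
  ((intervalIntegrable_iff_integrableOn_Ioc_of_le pi_pos.le).1
    (intervalIntegrable_sin_rpow hp)).mono_set
      fun _ hθ => ⟨ha.trans_lt hθ.1, hθ.2.le.trans hb⟩

end SinePower

/-- `|y - z e^{iθ}|²`. -/
def polarDistSq (y z θ : ℝ) : ℝ := (y - z) ^ 2 + 2 * y * z * (1 - cos θ)

lemma polarDistSq_nonneg (y z θ : ℝ) : 0 ≤ polarDistSq y z θ := by
  have h : polarDistSq y z θ = (1 + cos θ) / 2 * (y - z) ^ 2 + (1 - cos θ) / 2 * (y + z) ^ 2 := by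
    rw [polarDistSq]; ring
  rw [h]
  have := neg_one_le_cos θ
  have := cos_le_one θ
  have : 0 ≤ (1 + cos θ) / 2 := by linarith
  have : 0 ≤ (1 - cos θ) / 2 := by linarith
  positivity

lemma besselPoissonPart_eq_integral (lam a b τ y z : ℝ) :
    besselPoissonPart lam a b τ y z
      = ∫ θ in Ioo a b, (2 * lam * (y * z) ^ lam / π * sin θ ^ (2 * lam - 1))
          * homMonomial (-lam - 1 / 2) 1 (polarDistSq y z θ) τ := by
  rw [besselPoissonPart, ← integral_const_mul]
  refine integral_congr_ae (Eventually.of_forall fun θ => ?_)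
  have hD : τ ^ 2 + (y - z) ^ 2 + 2 * y * z * (1 - cos θ) = τ ^ 2 + polarDistSq y z θ := by
    rw [polarDistSq]; ring
  simp only [homMonomial, hD, Nat.cast_one, pow_one]
  rw [show -lam - 1 / 2 - 1 / 2 = -(lam + 1) by ring,
    Real.rpow_neg (by linarith [sq_nonneg τ, polarDistSq_nonneg y z θ])]
  ring

lemma exists_norm_iteratedDeriv_besselPoissonPart_le {lam : ℝ} (hlam : 0 < lam) {a b : ℝ}
    (ha : 0 ≤ a) (hb : b ≤ π) (m : ℕ) :
    ∃ C ≥ 0, ∀ y z τ, 0 ≤ y → 0 ≤ z → 0 < τ →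
      ‖iteratedDeriv m (fun σ => (besselPoissonPart lam a b σ y z : ℂ)) τ‖
        ≤ C * (y * z) ^ lam * ∫ θ in Ioo a b,
            sin θ ^ (2 * lam - 1) * (τ ^ 2 + polarDistSq y z θ) ^ (-lam - 1 / 2 - m / 2) := by
  obtain ⟨C, hC, h⟩ := exists_norm_iteratedDeriv_integral_le (α := ℝ)
    (by linarith : -lam - 1 / 2 ≤ 0) (Submodule.subset_span ⟨1, rfl⟩) m
  refine ⟨C * (2 * lam / π), by positivity, fun y z τ hy hz hτ => ?_⟩
  have hw : 0 ≤ 2 * lam * (y * z) ^ lam / π := by positivity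
  simp_rw [besselPoissonPart_eq_integral]
  refine (h _ _ _ ((integrableOn_sin_rpow (by linarith) ha hb).const_mul _) ?_
    (by unfold polarDistSq; fun_prop) (polarDistSq_nonneg y z) τ hτ).trans_eq ?_
  · filter_upwards [ae_restrict_mem measurableSet_Ioo] with θ hθ
    exact mul_nonneg hw (Real.rpow_nonneg
      (sin_nonneg_of_nonneg_of_le_pi (ha.trans hθ.1.le) (hθ.2.le.trans hb)) _)
  · simp_rw [mul_assoc, integral_const_mul]
    ring

lemma sq_rpow_eq_rpow_two_mul {x : ℝ} (hx : 0 ≤ x) (q : ℝ) : (x ^ 2) ^ q = x ^ (2 * q) := by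
  exact_mod_cast (Real.rpow_natCast_mul hx 2 q).symm

lemma setIntegral_sin_rpow_mul_rpow_le_of_le {p E a b u : ℝ} (hp : -1 < p) (hE : E ≤ 0)
    (ha : 0 ≤ a) (hb : b ≤ π) (hu : 0 < u) {B : ℝ → ℝ} (hB : ∀ θ ∈ Ioo a b, u ^ 2 ≤ B θ) :
    ∫ θ in Ioo a b, sin θ ^ p * B θ ^ E ≤ u ^ (2 * E) * ∫ θ in Ioo a b, sin θ ^ p := by
  have hsin : ∀ θ ∈ Ioo a b, 0 ≤ sin θ ^ p := fun θ hθ => Real.rpow_nonneg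
    (sin_nonneg_of_nonneg_of_le_pi (ha.trans hθ.1.le) (hθ.2.le.trans hb)) p
  rw [← integral_const_mul]
  refine integral_mono_of_nonneg ?_ ((integrableOn_sin_rpow hp ha hb).const_mul _) ?_
  · filter_upwards [ae_restrict_mem measurableSet_Ioo] with θ hθ
    have : 0 < B θ := lt_of_lt_of_le (by positivity) (hB θ hθ)
    have := hsin θ hθ
    positivity
  · filter_upwards [ae_restrict_mem measurableSet_Ioo] with θ hθ
    rw [mul_comm _ (sin θ ^ _), ← sq_rpow_eq_rpow_two_mul hu.le]
    exact mul_le_mul_of_nonneg_left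
      (Real.rpow_le_rpow_of_nonpos (by positivity) (hB θ hθ) hE) (hsin θ hθ)

lemma exists_norm_iteratedDeriv_besselPoisson2_le {lam : ℝ} (hlam : 0 < lam) (m : ℕ) :
    ∃ K ≥ 0, ∀ y z τ, 0 < y → 0 < z → 0 < τ →
      ‖iteratedDeriv m (fun σ => (besselPoisson2 lam σ y z : ℂ)) τ‖
        ≤ K * (τ + (y + z)) ^ (-(m : ℝ) - 1) := by
  obtain ⟨C, hC, h⟩ :=
    exists_norm_iteratedDeriv_besselPoissonPart_le hlam (by positivity : 0 ≤ π / 2) le_rfl m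
  set W := ∫ θ in Ioo (π / 2) π, sin θ ^ (2 * lam - 1)
  have hW : 0 ≤ W := setIntegral_nonneg measurableSet_Ioo fun θ hθ =>
    Real.rpow_nonneg (sin_nonneg_of_nonneg_of_le_pi (by linarith [hθ.1, pi_pos]) hθ.2.le) _
  refine ⟨C * W * 2 ^ ((m : ℝ) + 1), by positivity, fun y z τ hy hz hτ => ?_⟩
  set u := (τ + (y + z)) / 2
  have hu : 0 < u := by positivity
  have hkernel := setIntegral_sin_rpow_mul_rpow_le_of_le (p := 2 * lam - 1)
    (E := -lam - 1 / 2 - m / 2) (a := π / 2) (by linarith)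
    (by linarith [(m.cast_nonneg : (0 : ℝ) ≤ m)]) (by positivity) le_rfl hu
    (B := fun θ => τ ^ 2 + polarDistSq y z θ) fun θ hθ => by
      have hcos : cos θ ≤ 0 :=
        cos_nonpos_of_pi_div_two_le_of_le hθ.1.le (by linarith [hθ.2, pi_pos])
      have : 0 ≤ y * z * -cos θ := mul_nonneg (by positivity) (by linarith)
      simp only [u, polarDistSq]
      nlinarith [sq_nonneg (τ - y - z), sq_nonneg (y - z), sq_nonneg (τ - y), sq_nonneg (τ - z)]
  have hyz : (y * z) ^ lam ≤ u ^ (2 * lam) := by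
    rw [← sq_rpow_eq_rpow_two_mul hu.le]
    refine Real.rpow_le_rpow (by positivity) ?_ hlam.le
    simp only [u]
    nlinarith [sq_nonneg (y - z), sq_nonneg τ]
  calc ‖iteratedDeriv m (fun σ => (besselPoisson2 lam σ y z : ℂ)) τ‖
      ≤ C * (y * z) ^ lam * (u ^ (2 * (-lam - 1 / 2 - m / 2)) * W) :=
        (h y z τ hy.le hz.le hτ).trans (by gcongr)
    _ ≤ C * u ^ (2 * lam) * (u ^ (2 * (-lam - 1 / 2 - m / 2)) * W) := by gcongr
    _ = C * W * u ^ (-(m : ℝ) - 1) := by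
        rw [← show u ^ (2 * lam) * u ^ (2 * (-lam - 1 / 2 - m / 2)) = u ^ (-(m : ℝ) - 1) by
          rw [← Real.rpow_add hu]; ring_nf]
        ring
    _ = C * W * 2 ^ ((m : ℝ) + 1) * (τ + (y + z)) ^ (-(m : ℝ) - 1) := by
        rw [half_rpow_neg_sub_one (by positivity)]; ring

lemma rpow_sq_add_mul_sq_le {a κ θ E : ℝ} (ha : 0 < a) (hκ : 0 < κ) (hθ : 0 < θ) (hE : E ≤ 0) :
    (a ^ 2 + κ * θ ^ 2) ^ E ≤ κ ^ E * min ((a * κ ^ (-1 / 2 : ℝ)) ^ (2 * E)) (θ ^ (2 * E)) := by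
  set s := a * κ ^ (-1 / 2 : ℝ)
  have hs : 0 < s := by positivity
  have hsκ : a ^ 2 = κ * s ^ 2 := by
    rw [mul_pow, ← Real.rpow_mul_natCast hκ.le]
    norm_num [Real.rpow_neg_one]
    field_simp
  rw [hsκ, ← mul_add, Real.mul_rpow hκ.le (by positivity), ← sq_rpow_eq_rpow_two_mul hs.le,
    ← sq_rpow_eq_rpow_two_mul hθ.le]
  exact mul_le_mul_of_nonneg_left
    (le_min (Real.rpow_le_rpow_of_nonpos (by positivity) (by nlinarith) hE)
      (Real.rpow_le_rpow_of_nonpos (by positivity) (by nlinarith) hE))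
    (Real.rpow_nonneg hκ.le E)

lemma exists_setIntegral_sin_rpow_mul_rpow_le {p E : ℝ} (hp : -1 < p)
    (hpE : p + 2 * E + 1 < 0) :
    ∃ C ≥ 0, ∀ a κ (B : ℝ → ℝ), 0 < a → 0 < κ →
      (∀ θ ∈ Ioo 0 (π / 2), a ^ 2 + κ * θ ^ 2 ≤ B θ) →
        ∫ θ in Ioo 0 (π / 2), sin θ ^ p * B θ ^ E
          ≤ C * κ ^ (-(p + 1) / 2) * a ^ (p + 2 * E + 1) := by
  have hE : E ≤ 0 := by linarith
  set C₀ := max 1 ((2 / π) ^ p)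
  have hC₀ : 0 ≤ C₀ := le_max_of_le_left zero_le_one
  set I := 1 / (p + 1) - 1 / (p + 2 * E + 1)
  have hI : 0 ≤ I := sub_nonneg.2
    ((one_div_neg.2 hpE).le.trans (one_div_pos.2 (by linarith)).le)
  refine ⟨C₀ * I, by positivity, fun a κ B ha hκ hB => ?_⟩
  set s := a * κ ^ (-1 / 2 : ℝ)
  have hs : 0 < s := by positivity
  refine (setIntegral_le_of_le_rpow_mul_min (δ := 2 * E) (K := C₀ * κ ^ E) hp hpE
    hs (fun θ hθ => hθ.1) measurableSet_Ioo (by positivity)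
    (fun θ hθ => ?_) (fun θ hθ => ?_)).trans_eq ?_
  · have : 0 < B θ := lt_of_lt_of_le (by positivity) (hB θ hθ)
    have := Real.rpow_nonneg
      (sin_nonneg_of_nonneg_of_le_pi hθ.1.le (by linarith [hθ.2, pi_pos])) p
    positivity
  · have hθ0 : 0 < θ := hθ.1
    have : 0 < B θ := lt_of_lt_of_le (by positivity) (hB θ hθ)
    calc sin θ ^ p * B θ ^ E
        ≤ (C₀ * θ ^ p) * (κ ^ E * min (s ^ (2 * E)) (θ ^ (2 * E))) :=
          mul_le_mul (sin_rpow_le_mul_rpow p hθ0 hθ.2.le)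
            ((Real.rpow_le_rpow_of_nonpos (by positivity) (hB θ hθ) hE).trans
              (rpow_sq_add_mul_sq_le ha hκ hθ0 hE)) (by positivity) (by positivity)
      _ = C₀ * κ ^ E * (θ ^ p * min (s ^ (2 * E)) (θ ^ (2 * E))) := by ring
  · rw [Real.mul_rpow ha.le (by positivity), ← Real.rpow_mul hκ.le]
    have hκ' : κ ^ E * κ ^ (-1 / 2 * (p + 2 * E + 1)) = κ ^ (-(p + 1) / 2) := by
      rw [← Real.rpow_add hκ]; ring_nf
    linear_combination C₀ * I * a ^ (p + 2 * E + 1) * hκ'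

lemma exists_norm_iteratedDeriv_besselPoisson1_le {lam : ℝ} (hlam : 0 < lam) (m : ℕ) :
    ∃ K ≥ 0, ∀ y z τ, 0 < y → 0 < z → 0 < τ →
      ‖iteratedDeriv m (fun σ => (besselPoisson1 lam σ y z : ℂ)) τ‖
        ≤ K * (τ + |y - z|) ^ (-(m : ℝ) - 1) := by
  obtain ⟨C, hC, h⟩ := exists_norm_iteratedDeriv_besselPoissonPart_le hlam le_rfl
    (by linarith [pi_pos] : π / 2 ≤ π) m
  have hpE : 2 * lam - 1 + 2 * (-lam - 1 / 2 - m / 2) + 1 = -(m : ℝ) - 1 := by ring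
  obtain ⟨C', hC', h'⟩ := exists_setIntegral_sin_rpow_mul_rpow_le (p := 2 * lam - 1)
    (E := -lam - 1 / 2 - m / 2) (by linarith) (by linarith [(m.cast_nonneg : (0 : ℝ) ≤ m)])
  refine ⟨C * C' * (π ^ 2 / 4) ^ lam * 2 ^ ((m : ℝ) + 1), by positivity,
    fun y z τ hy hz hτ => ?_⟩
  set κ := 4 * y * z / π ^ 2
  set a := (τ + |y - z|) / 2
  have hκ : 0 < κ := by positivity
  have hkernel := h' a κ (fun θ => τ ^ 2 + polarDistSq y z θ) (by positivity) hκ fun θ hθ => by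
    have hcos := cos_le_one_sub_mul_cos_sq (x := θ)
      (by rw [abs_of_pos hθ.1]; linarith [hθ.2, pi_pos])
    have : κ * θ ^ 2 = 2 * y * z * (2 / π ^ 2 * θ ^ 2) := by simp only [κ]; ring
    simp only [a, polarDistSq, this]
    nlinarith [sq_abs (y - z), sq_nonneg (τ - |y - z|),
      mul_le_mul_of_nonneg_left (by linarith : 2 / π ^ 2 * θ ^ 2 ≤ 1 - cos θ)
        (by positivity : 0 ≤ 2 * y * z)]
  rw [hpE, show -(2 * lam - 1 + 1) / 2 = -lam by ring] at hkernel
  have hyz : (y * z) ^ lam * κ ^ (-lam) = (π ^ 2 / 4) ^ lam := by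
    rw [Real.rpow_neg hκ.le, ← div_eq_mul_inv, ← Real.div_rpow (by positivity) hκ.le]
    congr 1
    simp only [κ]
    field_simp
  calc ‖iteratedDeriv m (fun σ => (besselPoisson1 lam σ y z : ℂ)) τ‖
      ≤ C * (y * z) ^ lam * (C' * κ ^ (-lam) * a ^ (-(m : ℝ) - 1)) :=
        (h y z τ hy.le hz.le hτ).trans (by gcongr)
    _ = C * C' * (π ^ 2 / 4) ^ lam * a ^ (-(m : ℝ) - 1) := by rw [← hyz]; ring
    _ = C * C' * (π ^ 2 / 4) ^ lam * 2 ^ ((m : ℝ) + 1) * (τ + |y - z|) ^ (-(m : ℝ) - 1) := by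
        rw [half_rpow_neg_sub_one (by positivity)]; ring

lemma exists_norm_fracDeriv_besselPoisson1_le {β lam : ℝ} (hβ : 0 ≤ β) (hlam : 0 < lam) :
    ∃ K ≥ 0, ∀ y z t, 0 < y → 0 < z → 0 < t →
      ‖fracDeriv β (fun τ => (besselPoisson1 lam τ y z : ℂ)) t‖ ≤ K * (t + |y - z|) ^ (-β - 1) := by
  obtain ⟨K, hK, h⟩ := exists_norm_iteratedDeriv_besselPoisson1_le hlam (fracOrder β)
  have := Real.Gamma_pos_of_pos (sub_pos.2 (lt_fracOrder hβ))
  have := sub_pos.2 (lt_fracOrder hβ)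
  exact ⟨_, by positivity, fun y z t hy hz ht => norm_fracDeriv_le hβ hK (abs_nonneg _)
    (fun τ hτ => h y z τ hy hz hτ) ht⟩

lemma exists_norm_fracDeriv_besselPoisson2_le {β lam : ℝ} (hβ : 0 ≤ β) (hlam : 0 < lam) :
    ∃ K ≥ 0, ∀ y z t, 0 < y → 0 < z → 0 < t →
      ‖fracDeriv β (fun τ => (besselPoisson2 lam τ y z : ℂ)) t‖ ≤ K * (t + (y + z)) ^ (-β - 1) := by
  obtain ⟨K, hK, h⟩ := exists_norm_iteratedDeriv_besselPoisson2_le hlam (fracOrder β)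
  have := Real.Gamma_pos_of_pos (sub_pos.2 (lt_fracOrder hβ))
  have := sub_pos.2 (lt_fracOrder hβ)
  exact ⟨_, by positivity, fun y z t hy hz ht => norm_fracDeriv_le hβ hK (by positivity)
    (fun τ hτ => h y z τ hy hz hτ) ht⟩

end

/-- cone-square estimates for the pieces of the Bessel Poisson kernel:
`‖t^β ∂_t^β P_t^{𝔅_λ,1}(y,z)‖_{L²(Γ₊(x), dy dt/t²)} ≤ C/|x−z|` and
`‖t^β ∂_t^β P_t^{𝔅_λ,2}(y,z)‖_{L²(Γ₊(x), dy dt/t²)} ≤ C/(x+z)`. -/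
theorem statement15 (β lam : ℝ) (hβ : 0 < β) (hlam : 0 < lam) :
    ∃ C > (0 : ℝ),
      (∀ x z : ℝ, 0 < x → 0 < z → x ≠ z →
        Real.sqrt (∫ t in Set.Ioi (0 : ℝ), ∫ y in Set.Ioi (0 : ℝ),
            (if |x - y| < t then
                ‖((t ^ β : ℝ) : ℂ) *
                    fracDeriv β (fun τ => (besselPoisson1 lam τ y z : ℂ)) t‖ ^ 2 / t ^ 2
              else 0))
          ≤ C / |x - z|) ∧
      (∀ x z : ℝ, 0 < x → 0 < z →
        Real.sqrt (∫ t in Set.Ioi (0 : ℝ), ∫ y in Set.Ioi (0 : ℝ),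
            (if |x - y| < t then
                ‖((t ^ β : ℝ) : ℂ) *
                    fracDeriv β (fun τ => (besselPoisson2 lam τ y z : ℂ)) t‖ ^ 2 / t ^ 2
              else 0))
          ≤ C / (x + z)) := by
  obtain ⟨K₁, hK₁, h₁⟩ := exists_norm_fracDeriv_besselPoisson1_le hβ.le hlam
  obtain ⟨K₂, hK₂, h₂⟩ := exists_norm_fracDeriv_besselPoisson2_le hβ.le hlam
  refine ⟨2 ^ (β + 1) * (K₁ + K₂ + 1) * √(1 / β + 1), by positivity, ?_, ?_⟩
  · intro x z _ hz hxz
    refine (sqrt_integral_cone_le hβ hK₁ (fun y _ => abs_nonneg (y - z))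
      (abs_pos.2 (sub_ne_zero.2 hxz)) (fun y => by linarith [abs_sub_le x y z])
      fun t y ht hy => h₁ y z t hy hz ht).trans ?_
    gcongr
    linarith
  · intro x z hx hz
    refine (sqrt_integral_cone_le hβ hK₂ (fun y hy => by positivity) (by positivity)
      (fun y => by linarith [le_abs_self (x - y)])
      fun t y ht hy => h₂ y z t hy hz ht).trans ?_
    gcongr
    linarith
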